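/- arXiv:1505.07177 — 3 statements merged into one kernel-verified Lean document; each statement's English description precedes it below -/
import Mathlib

section
/- Let f : S¹ → S¹ be a homeomorphism of the circle. Then the topological entropy of f is zero. -/
open Filter Topology MeasureTheory

/-- `E` is an `(ε,n)`-separated set for `f`. -/
def IsSeparated {X : Type*} [MetricSpace X] (f : X → X) (ε : ℝ) (n : ℕ) (E : Set X) : Prop :=
  ∀ x ∈ E, ∀ y ∈ E, x ≠ y → ∃ k < n, ε < dist (f^[k] x) (f^[k] y)

/-- Maximal cardinality of an `(ε,n)`-separated set. -/
noncomputable def sepCount {X : Type*} [MetricSpace X] (f : X → X) (ε : ℝ) (n : ℕ) : ℕ :=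
  sSup {m : ℕ | ∃ E : Finset X, IsSeparated f ε n ↑E ∧ E.card = m}

/-- Exponential growth rate of `(ε,n)`-separated sets. -/
noncomputable def entSep {X : Type*} [MetricSpace X] (f : X → X) (ε : ℝ) : ℝ :=
  Filter.limsup (fun n : ℕ => Real.log (sepCount f ε n) / n) Filter.atTop

/-- Topological entropy via separated sets: the limit as `ε → 0` (equivalently, the
supremum over `ε > 0`, by monotonicity) of the growth rate of `(ε,n)`-separated sets. -/
noncomputable def topEnt {X : Type*} [MetricSpace X] (f : X → X) : ℝ :=
  ⨆ ε : {e : ℝ // 0 < e}, entSep f ε.1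

/-- Growth rate of periodic points: `limsup (1/n) log card Fix(fⁿ)`. -/
noncomputable def perGrowth {X : Type*} [MetricSpace X] (f : X → X) : ℝ :=
  Filter.limsup (fun n : ℕ => Real.log (({x : X | f^[n] x = x}).ncard) / n) Filter.atTop

/-!
Cut the circle at a finite set `G` of points so fine that every connected set avoiding `G` has
diameter at most `ε`. If `x, y` are points of an `(ε, n)`-separated set that are adjacent in the
angular order, some `fᵏ` with `k < n` pulls them more than `ε` apart, so `fᵏ` of the arc between
them must hit `G`: the arc contains a point of `P = ⋃_{k<n} f⁻ᵏ G`, which has at most `n · #G`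
points because `f` is injective. Hence separated sets have at most `n · #G + 1` points, which grows
subexponentially in `n`.
-/

open Set Finset Complex
open scoped Real

theorem Finset.card_le_card_add_one_of_forall_exists_between {α : Type*} [LinearOrder α]
    {A B : Finset α} (h : ∀ a ∈ A, ∀ a' ∈ A, a < a' → ∃ b ∈ B, a < b ∧ b < a') :
    #A ≤ #B + 1 := by
  induction A using Finset.induction_on_max generalizing B with
  | empty => simp
  | insert a s has ih =>
    rcases s.eq_empty_or_nonempty with rfl | hs
    · simp
    obtain ⟨b, hbB, hsb, hba⟩ := h _ (mem_insert_of_mem (s.max'_mem hs)) a (mem_insert_self a s)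
      (has _ (s.max'_mem hs))
    have hs_card : #s ≤ #(B.filter (· < s.max' hs)) + 1 := ih fun x hx y hy hxy => by
      obtain ⟨b', hb'B, hxb', hb'y⟩ := h x (mem_insert_of_mem hx) y (mem_insert_of_mem hy) hxy
      exact ⟨b', mem_filter.2 ⟨hb'B, hb'y.trans_le (s.le_max' y hy)⟩, hxb', hb'y⟩
    have hB_card : #(B.filter (· < s.max' hs)) < #B :=
      card_lt_card (filter_ssubset.2 ⟨b, hbB, hsb.not_gt⟩)
    rw [card_insert_of_notMem fun has' => (has a has').false]
    omega

theorem exists_nat_add_mul_mem_Ioo {a u v δ : ℝ} (hδ : 0 < δ) (hau : a ≤ u) (huv : u + δ < v) :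
    ∃ j : ℕ, a + j * δ ∈ Ioo u v := by
  refine ⟨⌊(u - a) / δ⌋₊ + 1, ?_, ?_⟩
  · have := Nat.lt_floor_add_one ((u - a) / δ)
    push_cast
    rw [div_lt_iff₀ hδ] at this
    linarith
  · have := Nat.floor_le (div_nonneg (sub_nonneg.2 hau) hδ.le)
    push_cast
    rw [le_div_iff₀ hδ] at this
    linarith

theorem dist_le_diam_image_Ioo {X : Type*} [PseudoMetricSpace X] {g : ℝ → X} {a b : ℝ}
    (hg : ContinuousOn g (Icc a b)) (hab : a < b) :
    dist (g a) (g b) ≤ Metric.diam (g '' Ioo a b) := by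
  have hsub : g '' Icc a b ⊆ closure (g '' Ioo a b) := by
    rw [← closure_Ioo hab.ne]
    exact ContinuousOn.image_closure (by rwa [closure_Ioo hab.ne])
  rw [← Metric.diam_closure]
  exact Metric.dist_le_diam_of_mem ((isCompact_Icc.image_of_continuousOn hg).isBounded.subset
    (image_mono Ioo_subset_Icc_self)).closure (hsub ⟨a, left_mem_Icc.2 hab.le, rfl⟩)
    (hsub ⟨b, right_mem_Icc.2 hab.le, rfl⟩)

theorem tendsto_log_div_nhds_zero_of_le_mul_add_one {u : ℕ → ℕ} {C : ℕ}
    (hu : ∀ n, u n ≤ n * C + 1) : Tendsto (fun n : ℕ => Real.log (u n) / n) atTop (𝓝 0) := by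
  have hlim : Tendsto (fun n : ℕ => Real.log n / n + Real.log (C + 1) / n) atTop (𝓝 0) := by
    simpa using (Real.isLittleO_log_id_atTop.tendsto_div_nhds_zero.comp
      tendsto_natCast_atTop_atTop).add (tendsto_const_div_atTop_nhds_zero_nat _)
  refine tendsto_of_tendsto_of_tendsto_of_le_of_le' tendsto_const_nhds hlim
    (Eventually.of_forall fun n => div_nonneg (Real.log_natCast_nonneg _) n.cast_nonneg) ?_
  filter_upwards [eventually_ge_atTop 1] with n hn
  rw [← add_div, ← Real.log_mul (by positivity) (by positivity)]
  refine div_le_div_of_nonneg_right ?_ n.cast_nonneg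
  rcases (u n).eq_zero_or_pos with h | h
  · rw [h, Nat.cast_zero, Real.log_zero]
    exact Real.log_nonneg (by norm_cast; nlinarith)
  · exact Real.log_le_log (by exact_mod_cast h) (by exact_mod_cast (hu n).trans (by nlinarith))

section Separated

variable {X : Type*} [MetricSpace X] {f : X → X} {ε : ℝ}

theorem sepCount_le_of_forall_card_le {n C : ℕ}
    (h : ∀ E : Finset X, IsSeparated f ε n E → #E ≤ C) : sepCount f ε n ≤ C :=
  csSup_le' <| by
    rintro _ ⟨E, hE, rfl⟩
    exact h E hE

theorem entSep_eq_zero_of_card_le_mul_add_one {C : ℕ}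
    (h : ∀ n, ∀ E : Finset X, IsSeparated f ε n E → #E ≤ n * C + 1) : entSep f ε = 0 :=
  (tendsto_log_div_nhds_zero_of_le_mul_add_one fun n =>
    sepCount_le_of_forall_card_le (h n)).limsup_eq

end Separated

namespace Circle

theorem dist_exp_exp_le (s t : ℝ) : dist (Circle.exp s) (Circle.exp t) ≤ |s - t| := by
  change dist (Circle.exp s : ℂ) (Circle.exp t) ≤ _
  rw [Complex.dist_eq, coe_exp, coe_exp,
    show (s : ℂ) * I = I * ↑(s - t) + t * I by push_cast; ring,
    Complex.exp_add, ← sub_one_mul, norm_mul, norm_exp_ofReal_mul_I, mul_one]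
  exact Real.norm_exp_I_mul_ofReal_sub_one_le

theorem isPreconnected_image_arg {S : Set Circle} (hS : IsPreconnected S)
    (hπ : Circle.exp π ∉ S) : IsPreconnected ((fun z : Circle => arg z) '' S) := by
  refine hS.image _ fun z hz => ?_
  have harg : arg z ≠ π := fun h => hπ (by rwa [← h, exp_arg])
  exact ((continuousAt_arg (mem_slitPlane_iff_arg.2 ⟨harg, z.coe_ne_zero⟩)).comp
    continuous_subtype_val.continuousAt).continuousWithinAt

theorem exists_finset_diam_le_of_isPreconnected {δ : ℝ} (hδ : 0 < δ) :
    ∃ G : Finset Circle, ∀ S : Set Circle, IsPreconnected S → Disjoint S G →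
      Metric.diam S ≤ δ := by
  classical
  obtain ⟨m, hm⟩ := exists_nat_gt (2 * π / δ)
  have hm₀ : (0 : ℝ) < m := (div_pos Real.two_pi_pos hδ).trans hm
  set η := 2 * π / m with hη
  have hη₀ : 0 < η := div_pos Real.two_pi_pos hm₀
  have hηδ : η ≤ δ := by
    rw [div_lt_iff₀ hδ] at hm
    rw [hη, div_le_iff₀ hm₀]
    linarith
  have hθm : -π + m * η = π := by
    rw [hη, mul_div_cancel₀ _ hm₀.ne']
    ring
  refine ⟨(range (m + 1)).image fun j : ℕ => Circle.exp (-π + j * η), fun S hS hSG => ?_⟩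
  have hgrid : ∀ j ≤ m, Circle.exp (-π + j * η) ∉ S := fun j hj hjS =>
    Set.disjoint_left.1 hSG hjS (mem_image_of_mem _ (mem_range.2 (Nat.lt_succ_of_le hj)))
  have hArg := isPreconnected_image_arg hS (hθm ▸ hgrid m le_rfl)
  have hgap : ∀ z ∈ S, ∀ w ∈ S, arg z ≤ arg w → arg w - arg z ≤ η := by
    intro z hz w hw hzw
    by_contra! hlt
    obtain ⟨j, hj⟩ := exists_nat_add_mul_mem_Ioo hη₀ (neg_pi_lt_arg z).le (by linarith)
    obtain ⟨y, hyS, hy⟩ := hArg.Icc_subset (mem_image_of_mem _ hz) (mem_image_of_mem _ hw)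
      (Ioo_subset_Icc_self hj)
    have hjm : j ≤ m := by
      have : (j : ℝ) * η < m * η := by linarith [hj.2, arg_le_pi (w : ℂ)]
      exact_mod_cast (lt_of_mul_lt_mul_right this hη₀.le).le
    exact hgrid j hjm (by rwa [← hy, exp_arg])
  refine Metric.diam_le_of_forall_dist_le hδ.le fun z hz w hw => ?_
  rw [← exp_arg z, ← exp_arg w]
  refine (dist_exp_exp_le _ _).trans (le_trans ?_ hηδ)
  rcases le_total (arg z) (arg w) with h | h
  · rw [abs_sub_comm, abs_of_nonneg (sub_nonneg.2 h)]
    exact hgap z hz w hw h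
  · rw [abs_of_nonneg (sub_nonneg.2 h)]
    exact hgap w hw z hz h

theorem exists_mem_Ioo_arg_map_exp_mem {g : Circle → Circle} (hg : Continuous g) {ε : ℝ}
    {G : Set Circle} (hG : ∀ S : Set Circle, IsPreconnected S → Disjoint S G → Metric.diam S ≤ ε)
    {x y : Circle} (hxy : arg x < arg y) (hdist : ε < dist (g x) (g y)) :
    ∃ s ∈ Ioo (arg x) (arg y), g (Circle.exp s) ∈ G := by
  by_contra! hno
  have hcont : Continuous (g ∘ Circle.exp) := hg.comp Circle.exp.continuous
  have hdisj : Disjoint ((g ∘ Circle.exp) '' Ioo (arg x) (arg y)) G := by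
    refine Set.disjoint_left.2 ?_
    rintro _ ⟨s, hs, rfl⟩
    exact hno s hs
  have := (dist_le_diam_image_Ioo hcont.continuousOn hxy).trans
    (hG _ (isPreconnected_Ioo.image _ hcont.continuousOn) hdisj)
  simp only [Function.comp_apply, exp_arg] at this
  linarith

theorem card_le_of_isSeparated {f : Circle → Circle} (hf : Continuous f)
    (hinj : Function.Injective f) {ε : ℝ} {G : Finset Circle}
    (hG : ∀ S : Set Circle, IsPreconnected S → Disjoint S G → Metric.diam S ≤ ε)
    {n : ℕ} {E : Finset Circle} (hE : IsSeparated f ε n E) : #E ≤ n * #G + 1 := by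
  classical
  set P := (range n).biUnion fun k => G.preimage f^[k] (hinj.iterate k).injOn
  have hP : #P ≤ n * #G := by
    simpa [P] using card_biUnion_le_card_mul (range n) _ #G fun k _ =>
      card_le_card_of_injOn f^[k] (fun x hx => mem_preimage.1 hx) (hinj.iterate k).injOn
  have hbetween : ∀ a ∈ E.image (fun z : Circle => arg z),
      ∀ a' ∈ E.image (fun z : Circle => arg z),
      a < a' → ∃ b ∈ P.image (fun z : Circle => arg z), a < b ∧ b < a' := by
    rintro _ hx' _ hy' hxy
    obtain ⟨x, hx, rfl⟩ := mem_image.1 hx'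
    obtain ⟨y, hy, rfl⟩ := mem_image.1 hy'
    obtain ⟨k, hk, hdist⟩ := hE x hx y hy fun h => hxy.ne (h ▸ rfl)
    obtain ⟨s, hs, hsG⟩ := exists_mem_Ioo_arg_map_exp_mem (hf.iterate k) hG hxy hdist
    have hsP : Circle.exp s ∈ P := mem_biUnion.2 ⟨k, mem_range.2 hk, mem_preimage.2 hsG⟩
    exact ⟨s, mem_image.2 ⟨_, hsP, arg_exp ((neg_pi_lt_arg _).trans hs.1)
      (hs.2.le.trans (arg_le_pi _))⟩, hs⟩
  calc #E = #(E.image fun z : Circle => arg z) :=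
        (Finset.card_image_of_injective _ injective_arg).symm
    _ ≤ #(P.image fun z : Circle => arg z) + 1 :=
      card_le_card_add_one_of_forall_exists_between hbetween
    _ ≤ #P + 1 := by gcongr; exact card_image_le
    _ ≤ n * #G + 1 := by gcongr

theorem entSep_eq_zero {f : Circle → Circle} (hf : Continuous f) (hinj : Function.Injective f)
    {ε : ℝ} (hε : 0 < ε) : entSep f ε = 0 := by
  obtain ⟨G, hG⟩ := exists_finset_diam_le_of_isPreconnected hε
  exact entSep_eq_zero_of_card_le_mul_add_one fun n E hE => card_le_of_isSeparated hf hinj hG hE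

end Circle

/-- A homeomorphism of the circle has zero topological entropy. -/
theorem stmt2 (f : Circle ≃ₜ Circle) : topEnt ⇑f = 0 := by
  have h (ε : {e : ℝ // 0 < e}) : entSep f ε.1 = 0 :=
    Circle.entSep_eq_zero f.continuous f.injective ε.2
  simp only [topEnt, h, Real.iSup_const_zero]
end

section
/- Let (X,d) be a compact metric space, f : X → X a homeomorphism, and μ an f-invariant Borel probability measure. Suppose f has the following closing property: for every ε > 0 there exists δ ∈ (0, ε) such that whenever d(x, f^n x) < δ for some x ∈ X and n ≥ 1, there exists a point p with f^n p = p (a periodic point) and d(p, x) ≤ ε. Then supp μ is contained in the closure of the set of periodic points of f. -/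
open Filter Topology MeasureTheory

/-- The support of a measure: points all of whose open neighborhoods have positive measure. -/
def measSupp {X : Type*} [TopologicalSpace X] [MeasurableSpace X]
    (μ : MeasureTheory.Measure X) : Set X :=
  {x : X | ∀ U : Set X, IsOpen U → x ∈ U → 0 < μ U}

/-!
Every neighbourhood of a point `x` of the support has positive measure, so by Poincaré recurrence
some point `y` of the `δ/2`-ball around `x` returns to that ball, giving `d(y, fⁿ y) < δ`. The
closing property then produces a periodic point `ε/2`-close to `y`, hence `ε`-close to `x`.
-/

section

variable {X : Type*} [MetricSpace X] [MeasurableSpace X]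

theorem measure_ball_pos_of_mem_measSupp {μ : Measure X} {x : X} (hx : x ∈ measSupp μ)
    {r : ℝ} (hr : 0 < r) : 0 < μ (Metric.ball x r) :=
  hx _ Metric.isOpen_ball (Metric.mem_ball_self hr)

theorem MeasureTheory.MeasurePreserving.exists_dist_lt_and_dist_iterate_lt_of_mem_measSupp
    [OpensMeasurableSpace X] {μ : Measure X} [IsFiniteMeasure μ] {f : X → X}
    (hf : MeasurePreserving f μ μ) {x : X} (hx : x ∈ measSupp μ) {r : ℝ} (hr : 0 < r) :
    ∃ y, dist y x < r ∧ ∃ n, 1 ≤ n ∧ dist y (f^[n] y) < 2 * r := by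
  obtain ⟨y, hy, n, hn, hny⟩ := hf.exists_mem_iterate_mem
    measurableSet_ball.nullMeasurableSet (measure_ball_pos_of_mem_measSupp hx hr).ne'
  rw [Metric.mem_ball] at hy hny
  refine ⟨y, hy, n, Nat.one_le_iff_ne_zero.mpr hn, ?_⟩
  calc dist y (f^[n] y) ≤ dist y x + dist (f^[n] y) x := dist_triangle_right _ _ _
    _ < 2 * r := by linarith

end

theorem stmt3_general {X : Type*} [MetricSpace X] [MeasurableSpace X] [BorelSpace X]
    (f : X ≃ₜ X) (μ : MeasureTheory.Measure X) [MeasureTheory.IsProbabilityMeasure μ]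
    (hinv : MeasureTheory.MeasurePreserving ⇑f μ μ)
    (hclose : ∀ ε : ℝ, 0 < ε → ∃ δ : ℝ, 0 < δ ∧ δ < ε ∧ ∀ (x : X) (n : ℕ), 1 ≤ n →
      dist x ((⇑f)^[n] x) < δ → ∃ p : X, (⇑f)^[n] p = p ∧ dist p x ≤ ε) :
    measSupp μ ⊆ closure {p : X | ∃ n : ℕ, 1 ≤ n ∧ (⇑f)^[n] p = p} := by
  intro x hx
  rw [Metric.mem_closure_iff]
  intro ε hε
  obtain ⟨δ, hδ, hδε, hclosing⟩ := hclose (ε / 2) (half_pos hε)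
  obtain ⟨y, hyx, n, hn, hyn⟩ :=
    hinv.exists_dist_lt_and_dist_iterate_lt_of_mem_measSupp hx (half_pos hδ)
  obtain ⟨p, hp, hpy⟩ := hclosing y n hn (by linarith)
  refine ⟨p, ⟨n, hn, hp⟩, ?_⟩
  calc dist x p ≤ dist x y + dist y p := dist_triangle x y p
    _ < ε := by rw [dist_comm x y, dist_comm y p]; linarith

/-- The closing property implies every invariant probability measure is supported on the
closure of the periodic points. -/
theorem stmt3 {X : Type*} [MetricSpace X] [CompactSpace X] [MeasurableSpace X] [BorelSpace X]
    (f : X ≃ₜ X) (μ : MeasureTheory.Measure X) [MeasureTheory.IsProbabilityMeasure μ]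
    (hinv : MeasureTheory.MeasurePreserving ⇑f μ μ)
    (hclose : ∀ ε : ℝ, 0 < ε → ∃ δ : ℝ, 0 < δ ∧ δ < ε ∧ ∀ (x : X) (n : ℕ), 1 ≤ n →
      dist x ((⇑f)^[n] x) < δ → ∃ p : X, (⇑f)^[n] p = p ∧ dist p x ≤ ε) :
    measSupp μ ⊆ closure {p : X | ∃ n : ℕ, 1 ≤ n ∧ (⇑f)^[n] p = p} :=
  stmt3_general f μ hinv hclose
end

section
/- Let (X,d) be a compact metric space and f : X → X an expansive homeomorphism with expansiveness constant η. Then the growth rate of periodic points satisfies limsup_{n→∞} (1/n) log card(Fix(f^n)) ≤ h_top(f). -/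
open Filter Topology MeasureTheory

/-!
Expansiveness makes `Fix(fⁿ)` an `(η, n)`-separated set, so the periodic growth rate is at most the
`η`-growth rate of separated sets. To compare with `h_top`, which is a supremum over all `ε > 0`
(and a junk `0` in `ℝ` if that supremum is infinite), one needs a bound uniform in `ε`. By
compactness expansiveness is uniform: there is `m` such that points `ε` apart are `η`-separated by
some iterate `f^j` with `|j| ≤ m`. Pulling back by `f⁻ᵐ` thus turns `(ε, n)`-separated sets into
`(η, n + 2m)`-separated ones, which have at most `|S|^(n + 2m)` points for an `η/2`-net `S`.
-/

section GrowthRate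

variable {u v : ℕ → ℕ} {C k : ℕ}

lemma log_natCast_le_log_natCast {a b : ℕ} (h : a ≤ b) : Real.log a ≤ Real.log b := by
  rcases a.eq_zero_or_pos with rfl | ha
  · simpa using Real.log_natCast_nonneg b
  · exact Real.log_le_log (by exact_mod_cast ha) (by exact_mod_cast h)

lemma log_natCast_le_mul_log {a N : ℕ} (h : a ≤ C ^ N) : Real.log a ≤ N * Real.log C := by
  simpa using log_natCast_le_log_natCast h

lemma isCoboundedUnder_log_div (u : ℕ → ℕ) :
    IsCoboundedUnder (· ≤ ·) atTop (fun n : ℕ => Real.log (u n) / n) :=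
  isCoboundedUnder_le_of_le atTop fun n => div_nonneg (Real.log_natCast_nonneg _) n.cast_nonneg

lemma tendsto_add_mul_log_div :
    Tendsto (fun n : ℕ => Real.log C + k * Real.log C / n) atTop (𝓝 (Real.log C)) := by
  simpa using tendsto_const_nhds.add
    (tendsto_const_nhds.div_atTop (tendsto_natCast_atTop_atTop (R := ℝ)))

lemma eventually_log_div_le (h : ∀ n, u n ≤ C ^ (n + k)) :
    ∀ᶠ n : ℕ in atTop, Real.log (u n) / n ≤ Real.log C + k * Real.log C / n := by
  filter_upwards [eventually_gt_atTop 0] with n hn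
  have hn' : (0 : ℝ) < n := by exact_mod_cast hn
  calc Real.log (u n) / n ≤ (n + k) * Real.log C / n := by
        gcongr; exact_mod_cast log_natCast_le_mul_log (h n)
    _ = Real.log C + k * Real.log C / n := by field_simp

lemma isBoundedUnder_log_div (h : ∀ n, u n ≤ C ^ (n + k)) :
    IsBoundedUnder (· ≤ ·) atTop (fun n : ℕ => Real.log (u n) / n) :=
  tendsto_add_mul_log_div.isBoundedUnder_le.mono_le (eventually_log_div_le h)

lemma limsup_log_div_le (h : ∀ n, u n ≤ C ^ (n + k)) :
    limsup (fun n : ℕ => Real.log (u n) / n) atTop ≤ Real.log C :=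
  (limsup_le_limsup (eventually_log_div_le h) (isCoboundedUnder_log_div u)
    tendsto_add_mul_log_div.isBoundedUnder_le).trans_eq tendsto_add_mul_log_div.limsup_eq

lemma limsup_log_div_mono (huv : ∀ᶠ n in atTop, u n ≤ v n)
    (hv : IsBoundedUnder (· ≤ ·) atTop (fun n : ℕ => Real.log (v n) / n)) :
    limsup (fun n : ℕ => Real.log (u n) / n) atTop
      ≤ limsup (fun n : ℕ => Real.log (v n) / n) atTop := by
  refine limsup_le_limsup ?_ (isCoboundedUnder_log_div u) hv
  filter_upwards [huv] with n hn
  exact div_le_div_of_nonneg_right (log_natCast_le_log_natCast hn) n.cast_nonneg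

end GrowthRate

section Counting

variable {X : Type*} [MetricSpace X] {f : X → X} {ε : ℝ} {n : ℕ} {S : Finset X}

lemma IsSeparated.card_le_pow {E : Finset X} (hE : IsSeparated f ε n E)
    (hS : ∀ x, ∃ s ∈ S, dist x s < ε / 2) : E.card ≤ S.card ^ n := by
  choose c hcS hc using hS
  let itinerary : X → Fin n → S := fun x k => ⟨c (f^[k] x), hcS _⟩
  have hinj : Set.InjOn itinerary E := by
    intro x hx y hy hxy
    by_contra hne
    obtain ⟨k, hk, hsep⟩ := hE x hx y hy hne
    have hck : c (f^[k] x) = c (f^[k] y) := congrArg Subtype.val (congrFun hxy ⟨k, hk⟩)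
    have := dist_triangle_right (f^[k] x) (f^[k] y) (c (f^[k] x))
    linarith [hc (f^[k] x), hck ▸ hc (f^[k] y)]
  calc E.card ≤ (Finset.univ : Finset (Fin n → S)).card :=
        Finset.card_le_card_of_injOn itinerary (fun _ _ => by simp) hinj
    _ = S.card ^ n := by simp

lemma sepCount_le_pow (hS : ∀ x, ∃ s ∈ S, dist x s < ε / 2) : sepCount f ε n ≤ S.card ^ n :=
  csSup_le' <| by rintro _ ⟨E, hE, rfl⟩; exact hE.card_le_pow hS

lemma IsSeparated.ncard_le_sepCount {A : Set X} (hA : IsSeparated f ε n A)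
    (hS : ∀ x, ∃ s ∈ S, dist x s < ε / 2) : A.ncard ≤ sepCount f ε n := by
  rcases A.finite_or_infinite with hfin | hinf
  · have hbdd : BddAbove {m | ∃ E : Finset X, IsSeparated f ε n E ∧ E.card = m} :=
      ⟨S.card ^ n, by rintro _ ⟨E, hE, rfl⟩; exact hE.card_le_pow hS⟩
    rw [Set.ncard_eq_toFinset_card A hfin]
    exact le_csSup hbdd ⟨hfin.toFinset, by simpa using hA, rfl⟩
  · simp [hinf.ncard]

end Counting

lemma Function.LeftInverse.iterate_add_apply_iterate_add {α : Type*} {f g : α → α}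
    (hfg : Function.LeftInverse f g) (j k m : ℕ) (x : α) :
    f^[j + k] (g^[k + m] x) = f^[j] (g^[m] x) := by
  rw [Function.iterate_add_apply, Function.iterate_add_apply g, hfg.iterate k]

lemma Function.IsPeriodicPt.homeomorph_symm_iterate_eq {X : Type*} [TopologicalSpace X]
    {f : X ≃ₜ X} {n : ℕ} {x : X} (hx : Function.IsPeriodicPt f n x) (hn : 0 < n) (m : ℕ) :
    (⇑f.symm)^[m] x = (⇑f)^[(n * m - m) % n] x := by
  apply (f.injective.iterate m)
  rw [hx.iterate_mod_apply, Function.LeftInverse.iterate f.apply_symm_apply,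
    ← Function.iterate_add_apply, Nat.add_sub_cancel' (Nat.le_mul_of_pos_left m hn),
    (hx.mul_const m).eq]

section Expansive

variable {X : Type*} [MetricSpace X]

def IsExpansive (f : X ≃ₜ X) (η : ℝ) : Prop :=
  ∀ x y : X, (∀ n : ℕ, dist ((⇑f)^[n] x) ((⇑f)^[n] y) ≤ η ∧
    dist ((⇑f.symm)^[n] x) ((⇑f.symm)^[n] y) ≤ η) → x = y

variable {f : X ≃ₜ X} {η ε : ℝ} {S : Finset X}

lemma IsExpansive.exists_lt_dist (hf : IsExpansive f η) {x y : X} (hxy : x ≠ y) :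
    ∃ n, η < dist ((⇑f)^[n] x) ((⇑f)^[n] y) ∨ η < dist ((⇑f.symm)^[n] x) ((⇑f.symm)^[n] y) := by
  by_contra! h
  exact hxy (hf x y h)

lemma IsExpansive.isSeparated_fixedPoints (hf : IsExpansive f η) {n : ℕ} (hn : 0 < n) :
    IsSeparated f η n {x | (⇑f)^[n] x = x} := by
  intro x hx y hy hxy
  obtain ⟨m, hm | hm⟩ := hf.exists_lt_dist hxy
  · refine ⟨m % n, Nat.mod_lt m hn, ?_⟩
    rwa [Function.IsPeriodicPt.iterate_mod_apply hx, Function.IsPeriodicPt.iterate_mod_apply hy]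
  · refine ⟨(n * m - m) % n, Nat.mod_lt _ hn, ?_⟩
    rwa [← Function.IsPeriodicPt.homeomorph_symm_iterate_eq hx hn,
      ← Function.IsPeriodicPt.homeomorph_symm_iterate_eq hy hn]

lemma IsExpansive.exists_iterate_lt_dist [CompactSpace X] (hf : IsExpansive f η)
    (hε : 0 < ε) : ∃ m, ∀ x y, ε ≤ dist x y →
      ∃ j < 2 * m + 1, η < dist ((⇑f)^[j] ((⇑f.symm)^[m] x)) ((⇑f)^[j] ((⇑f.symm)^[m] y)) := by
  have hinv : Function.LeftInverse f f.symm := f.apply_symm_apply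
  -- `U m`: pairs that some `f^j`, `|j| ≤ m`, moves `η` apart. These open sets increase with `m`
  -- and cover the compact set `{ε ≤ dist}`.
  let U : ℕ → Set (X × X) := fun m =>
    {p | ∃ j < 2 * m + 1, η < dist ((⇑f)^[j] ((⇑f.symm)^[m] p.1)) ((⇑f)^[j] ((⇑f.symm)^[m] p.2))}
  have hopen (m : ℕ) : IsOpen (U m) := by
    simp only [U, Set.ofPred_exists, Set.ofPred_and]
    refine isOpen_iUnion fun j => isOpen_const.inter (isOpen_lt continuous_const ?_)
    have hcont := (f.continuous.iterate j).comp (f.symm.continuous.iterate m)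
    exact (hcont.comp continuous_fst).dist (hcont.comp continuous_snd)
  have hmono : Monotone U := by
    rintro a b hab p ⟨j, hj, hp⟩
    obtain ⟨d, rfl⟩ := Nat.exists_eq_add_of_le hab
    refine ⟨j + d, by omega, ?_⟩
    rwa [add_comm a d, hinv.iterate_add_apply_iterate_add, hinv.iterate_add_apply_iterate_add]
  have hcover : {p : X × X | ε ≤ dist p.1 p.2} ⊆ ⋃ m, U m := by
    rintro ⟨x, y⟩ hxy
    have hne : x ≠ y := by rintro rfl; simp at hxy; linarith
    obtain ⟨n, hn | hn⟩ := hf.exists_lt_dist hne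
    · have hback (z : X) : (⇑f)^[n + n] ((⇑f.symm)^[n] z) = (⇑f)^[n] z := by
        simpa using hinv.iterate_add_apply_iterate_add n n 0 z
      refine Set.mem_iUnion.2 ⟨n, n + n, by omega, ?_⟩
      simpa only [hback] using hn
    · exact Set.mem_iUnion.2 ⟨n, 0, by omega, hn⟩
  have hK : IsCompact {p : X × X | ε ≤ dist p.1 p.2} :=
    (isClosed_le continuous_const continuous_dist).isCompact
  obtain ⟨m, hm⟩ := hK.elim_directed_cover U hopen hcover hmono.directed_le
  exact ⟨m, fun x y hxy => hm (show (x, y) ∈ {p : X × X | ε ≤ dist p.1 p.2} from hxy)⟩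

lemma IsSeparated.image_symm_iterate {m n : ℕ} (hm : ∀ x y, ε ≤ dist x y →
      ∃ j < 2 * m + 1, η < dist ((⇑f)^[j] ((⇑f.symm)^[m] x)) ((⇑f)^[j] ((⇑f.symm)^[m] y)))
    {A : Set X} (hA : IsSeparated f ε n A) :
    IsSeparated f η (n + 2 * m) ((⇑f.symm)^[m] '' A) := by
  have hcomm : Function.Commute f f.symm := fun x => by simp
  rintro _ ⟨x, hx, rfl⟩ _ ⟨y, hy, rfl⟩ hne
  obtain ⟨k, hk, hsep⟩ := hA x hx y hy (fun hxy => hne (hxy ▸ rfl))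
  obtain ⟨j, hj, hfar⟩ := hm _ _ hsep.le
  refine ⟨j + k, by omega, ?_⟩
  rwa [Function.iterate_add_apply, Function.iterate_add_apply, hcomm.iterate_iterate k m,
    hcomm.iterate_iterate k m]

lemma IsExpansive.exists_sepCount_le_pow [CompactSpace X] (hf : IsExpansive f η) (hε : 0 < ε)
    (hS : ∀ x, ∃ s ∈ S, dist x s < η / 2) : ∃ m, ∀ n, sepCount f ε n ≤ S.card ^ (n + 2 * m) := by
  classical
  obtain ⟨m, hm⟩ := hf.exists_iterate_lt_dist hε
  refine ⟨m, fun n => csSup_le' ?_⟩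
  rintro _ ⟨E, hE, rfl⟩
  have hsep : IsSeparated f η (n + 2 * m) ↑(E.image (⇑f.symm)^[m]) := by
    rw [Finset.coe_image]
    exact hE.image_symm_iterate hm
  rw [← Finset.card_image_of_injective E (f.symm.injective.iterate m)]
  exact hsep.card_le_pow hS

lemma IsExpansive.entSep_le_log_card [CompactSpace X] (hf : IsExpansive f η) (hε : 0 < ε)
    (hS : ∀ x, ∃ s ∈ S, dist x s < η / 2) : entSep f ε ≤ Real.log S.card :=
  let ⟨_, hm⟩ := hf.exists_sepCount_le_pow hε hS
  limsup_log_div_le hm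

end Expansive

/-- For an expansive homeomorphism, the growth rate of periodic points is bounded by the
topological entropy. -/
theorem stmt10 {X : Type*} [MetricSpace X] [CompactSpace X] (f : X ≃ₜ X) (η : ℝ) (hη : 0 < η)
    (hexp : ∀ x y : X,
      (∀ n : ℕ, dist ((⇑f)^[n] x) ((⇑f)^[n] y) ≤ η ∧
        dist ((⇑f.symm)^[n] x) ((⇑f.symm)^[n] y) ≤ η) → x = y) :
    perGrowth ⇑f ≤ topEnt ⇑f := by
  have hf : IsExpansive f η := hexp
  obtain ⟨t, -, ht, hcover⟩ := finite_cover_balls_of_compact (isCompact_univ (X := X)) (half_pos hη)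
  have hS (x : X) : ∃ s ∈ ht.toFinset, dist x s < η / 2 := by
    simpa using hcover (Set.mem_univ x)
  have hfix : ∀ᶠ n in atTop, {x | (⇑f)^[n] x = x}.ncard ≤ sepCount f η n :=
    (eventually_gt_atTop 0).mono fun _ hn =>
      (hf.isSeparated_fixedPoints hn).ncard_le_sepCount hS
  have hper : perGrowth f ≤ entSep f η :=
    limsup_log_div_mono hfix (isBoundedUnder_log_div (k := 0) fun _ => sepCount_le_pow hS)
  have hent : BddAbove (Set.range fun ε : {e : ℝ // 0 < e} => entSep f ε.1) :=
    ⟨_, Set.forall_mem_range.2 fun ε => hf.entSep_le_log_card ε.2 hS⟩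
  exact hper.trans (le_ciSup hent ⟨η, hη⟩)
end
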